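/- (Extension of CLT by variance continuity.) Let {ξ_l^{(n)}}_{l=1}^n be a triangular array of random variables, 𝓝_n[φ] = Σ_{l=1}^n φ(ξ_l^{(n)}) the corresponding linear statistics, and {d_n} a sequence of positive numbers. Assume: (a) there is a normed vector space 𝓛 of test functions and a constant C with d_n Var{𝓝_n[φ]} ≤ C ‖φ‖² for all φ ∈ 𝓛 and all n; (b) there is a dense linear manifold 𝓛₁ ⊂ 𝓛 and a continuous quadratic functional V : 𝓛₁ → ℝ₊ such that Z_n[xφ] := E{exp(i x d_n^{1/2} 𝓝°_n[φ])} converges to e^{−x²V[φ]/2} as n → ∞, uniformly in x on compact intervals, for every φ ∈ 𝓛₁. Then V admits a continuous extension to 𝓛 and for every φ ∈ 𝓛 one has Z_n[xφ] → e^{−x²V[φ]/2} uniformly in x on compact intervals, i.e. the CLT holds for all φ ∈ 𝓛. -/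

import Mathlib

/-!
The variance bound and `‖e^{ia} - e^{ib}‖ ≤ |a - b|` make `φ ↦ Z_n[xφ]` Lipschitz on `𝓛` with
constant `|x| √C`, uniformly in `n`. In the limit, the Gaussians `exp (-x² V φ / 2)` on `𝓛₁` inherit
this bound. For `x = 1` it makes `exp (-V / 2)` uniformly continuous, and homogeneity of `V` gives
`V φ ≤ 8 C ‖φ‖²`, which keeps `exp (-V / 2)` away from zero on bounded sets; so it extends
continuously to `𝓛` and `-2 log` of the extension extends `V`. An `ε/3` argument through a nearby
`ψ ∈ 𝓛₁` then carries the uniform convergence over to all of `𝓛`.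
-/

open MeasureTheory ProbabilityTheory Filter

/-- The characteristic function `Z_n[xφ] = E exp(i x d^{1/2} (𝓝_n[φ] - E 𝓝_n[φ]))`
of the normalized centered linear statistic. -/
noncomputable def Zfun {Ω : Type*} [MeasurableSpace Ω] (μ : Measure Ω) {n : ℕ}
    (ξ : Fin n → Ω → ℝ) (d : ℝ) (x : ℝ) (φ : ℝ → ℝ) : ℂ :=
  ∫ ω, Complex.exp (Complex.I * x * Real.sqrt d *
    ((∑ l, φ (ξ l ω)) - ∫ ω', ∑ l, φ (ξ l ω') ∂μ)) ∂μ

open Real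

open Complex in
lemma norm_cexp_I_mul_sub_cexp_I_mul_le (a b : ℝ) :
    ‖cexp (I * a) - cexp (I * b)‖ ≤ |a - b| := by
  have h : cexp (I * a) - cexp (I * b) = cexp (I * b) * (cexp (I * ↑(a - b)) - 1) := by
    rw [mul_sub, ← Complex.exp_add]; push_cast; ring_nf
  rw [h, norm_mul, mul_comm I, Complex.norm_exp_ofReal_mul_I, one_mul, ← Real.norm_eq_abs]
  exact Real.norm_exp_I_mul_ofReal_sub_one_le

section Probability

variable {Ω : Type*} [MeasurableSpace Ω] {μ : Measure Ω}

open Complex in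
lemma integrable_cexp_I_mul [IsFiniteMeasure μ] {X : Ω → ℝ} (hX : AEStronglyMeasurable X μ) :
    Integrable (fun ω => cexp (I * X ω)) μ := by
  refine Integrable.of_bound (C := 1) ?_ (ae_of_all _ fun ω => ?_)
  · exact continuous_exp.comp_aestronglyMeasurable
      ((continuous_ofReal.comp_aestronglyMeasurable hX).const_mul I)
  · rw [mul_comm, Complex.norm_exp_ofReal_mul_I]

lemma integral_abs_sub_integral_le_sqrt_variance [IsProbabilityMeasure μ] {X : Ω → ℝ}
    (hX : MemLp X 2 μ) : ∫ ω, |X ω - μ[X]| ∂μ ≤ √(Var[X; μ]) := by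
  have hdev : MemLp (fun ω => |X ω - μ[X]|) 2 μ := (hX.sub (memLp_const _)).abs
  have hsq : μ[(fun ω => |X ω - μ[X]|) ^ 2] = Var[X; μ] := by
    simp only [Pi.pow_apply, sq_abs, variance_eq_integral hX.aemeasurable]
  apply Real.le_sqrt_of_sq_le
  linarith [variance_nonneg (fun ω => |X ω - μ[X]|) μ, variance_eq_sub hdev]

open Complex in
lemma norm_integral_cexp_centered_sub_le [IsProbabilityMeasure μ] {X Y : Ω → ℝ}
    (hX : MemLp X 2 μ) (hY : MemLp Y 2 μ) (t : ℝ) :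
    ‖∫ ω, cexp (I * ↑(t * (X ω - μ[X]))) ∂μ - ∫ ω, cexp (I * ↑(t * (Y ω - μ[Y]))) ∂μ‖
      ≤ |t| * √(Var[X - Y; μ]) := by
  have hmean : μ[X - Y] = μ[X] - μ[Y] :=
    integral_sub (hX.integrable one_le_two) (hY.integrable one_le_two)
  have hXY : MemLp (X - Y) 2 μ := hX.sub hY
  have hcentered {Z : Ω → ℝ} (hZ : MemLp Z 2 μ) :
      AEStronglyMeasurable (fun ω => t * (Z ω - μ[Z])) μ :=
    (hZ.1.sub aestronglyMeasurable_const).const_mul t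
  rw [← integral_sub (integrable_cexp_I_mul (hcentered hX))
    (integrable_cexp_I_mul (hcentered hY))]
  calc _ ≤ ∫ ω, |t| * |(X - Y) ω - μ[X - Y]| ∂μ := by
        refine norm_integral_le_of_norm_le (((hXY.integrable one_le_two).sub
          (integrable_const _)).abs.const_mul _) (ae_of_all _ fun ω => ?_)
        refine (norm_cexp_I_mul_sub_cexp_I_mul_le _ _).trans_eq ?_
        rw [hmean, ← abs_mul, Pi.sub_apply]; ring_nf
    _ ≤ |t| * √(Var[X - Y; μ]) := by
        rw [integral_const_mul]
        exact mul_le_mul_of_nonneg_left (integral_abs_sub_integral_le_sqrt_variance hXY)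
          (abs_nonneg t)

lemma dist_Zfun_le [IsProbabilityMeasure μ] {n : ℕ} (ξ : Fin n → Ω → ℝ) {d : ℝ} (hd : 0 ≤ d)
    (x : ℝ) {f g : ℝ → ℝ}
    (hf : MemLp (fun ω => ∑ l, f (ξ l ω)) 2 μ) (hg : MemLp (fun ω => ∑ l, g (ξ l ω)) 2 μ) {B : ℝ}
    (hvar : d * Var[fun ω => ∑ l, (f - g) (ξ l ω); μ] ≤ B) :
    dist (Zfun μ ξ d x f) (Zfun μ ξ d x g) ≤ |x| * √B := by
  have hZ (h : ℝ → ℝ) : Zfun μ ξ d x h = ∫ ω, Complex.exp (Complex.I *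
      ↑((x * √d) * ((fun ω => ∑ l, h (ξ l ω)) ω - μ[fun ω => ∑ l, h (ξ l ω)]))) ∂μ := by
    unfold Zfun
    congr with ω
    push_cast
    ring_nf
  have hsum : (fun ω => ∑ l, (f - g) (ξ l ω))
      = (fun ω => ∑ l, f (ξ l ω)) - fun ω => ∑ l, g (ξ l ω) := by
    ext ω; simp [Finset.sum_sub_distrib]
  calc dist (Zfun μ ξ d x f) (Zfun μ ξ d x g)
      ≤ |x * √d| * √(Var[fun ω => ∑ l, (f - g) (ξ l ω); μ]) := by
        rw [dist_eq_norm, hZ, hZ, hsum]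
        exact norm_integral_cexp_centered_sub_le hf hg _
    _ = |x| * √(d * Var[fun ω => ∑ l, (f - g) (ξ l ω); μ]) := by
        rw [Real.sqrt_mul hd, abs_mul, abs_of_nonneg (Real.sqrt_nonneg d), mul_assoc]
    _ ≤ |x| * √B := by gcongr

end Probability

section Extension

variable {E : Type*} [NormedAddCommGroup E] [NormedSpace ℝ E] {S : Submodule ℝ E} {V : S → ℝ}
  {K : ℝ}

lemma le_mul_norm_sq_of_abs_exp_sub_le (hV0 : V 0 = 0)
    (hV : ∀ (φ ψ : S) (x : ℝ),
      |rexp (-(x ^ 2 * V φ / 2)) - rexp (-(x ^ 2 * V ψ / 2))| ≤ |x| * (K * ‖(φ : E) - ψ‖))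
    (φ : S) : V φ ≤ 8 * K ^ 2 * ‖(φ : E)‖ ^ 2 := by
  rcases le_or_gt (V φ) 0 with hφ | hφ
  · exact hφ.trans (by positivity)
  -- test at the point `x` where the Gaussian equals `e⁻¹`
  set x := √(2 / V φ)
  have hx2 : x ^ 2 = 2 / V φ := Real.sq_sqrt (by positivity)
  have hexp : rexp (-1) ≤ 1 / 2 := by
    rw [Real.exp_neg, inv_le_comm₀ (Real.exp_pos 1) (by norm_num)]
    linarith [Real.add_one_le_exp 1]
  have h := hV φ 0 x
  rw [hV0, show x ^ 2 * V φ / 2 = 1 by rw [hx2]; field_simp, mul_zero, zero_div, neg_zero,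
    Real.exp_zero, abs_of_nonpos (by linarith), abs_of_nonneg (Real.sqrt_nonneg _),
    ZeroMemClass.coe_zero, sub_zero] at h
  have hsq : 1 / 4 ≤ x ^ 2 * (K ^ 2 * ‖(φ : E)‖ ^ 2) := by
    nlinarith [show 1 / 2 ≤ x * (K * ‖(φ : E)‖) by linarith]
  rw [hx2, div_mul_eq_mul_div, le_div_iff₀ hφ] at hsq
  linarith

lemma exists_continuous_extension_of_abs_exp_sub_le (hS : Dense (S : Set E)) (hV0 : V 0 = 0)
    (hV : ∀ (φ ψ : S) (x : ℝ),
      |rexp (-(x ^ 2 * V φ / 2)) - rexp (-(x ^ 2 * V ψ / 2))| ≤ |x| * (K * ‖(φ : E) - ψ‖)) :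
    ∃ Vbar : E → ℝ, Continuous Vbar ∧ (∀ φ : S, Vbar φ = V φ) ∧
      ∀ (φ ψ : E) (x : ℝ),
        |rexp (-(x ^ 2 * Vbar φ / 2)) - rexp (-(x ^ 2 * Vbar ψ / 2))| ≤ |x| * (K * ‖φ - ψ‖) := by
  set W : S → ℝ := fun φ => rexp (-(V φ / 2))
  have hW : UniformContinuous W := by
    refine (LipschitzWith.of_dist_le' (K := K) fun φ ψ => ?_).uniformContinuous
    simpa [W, Real.dist_eq, dist_eq_norm] using hV φ ψ 1
  set Wbar : E → ℝ := hS.extend W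
  have hWbar_cont : Continuous Wbar := (hS.uniformContinuous_extend hW).continuous
  have hWbar_eq (φ : S) : Wbar φ = W φ := hS.extend_of_ind hW φ
  have hWbar_ge (φ : E) : rexp (-(4 * K ^ 2 * ‖φ‖ ^ 2)) ≤ Wbar φ := by
    refine hS.induction (fun φ hφ => ?_) (isClosed_le (by fun_prop) hWbar_cont) φ
    rw [hWbar_eq ⟨φ, hφ⟩, Real.exp_le_exp]
    linarith [le_mul_norm_sq_of_abs_exp_sub_le hV0 hV ⟨φ, hφ⟩]
  have hWbar_pos (φ : E) : 0 < Wbar φ := (Real.exp_pos _).trans_le (hWbar_ge φ)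
  set Vbar : E → ℝ := fun φ => -2 * Real.log (Wbar φ)
  have hVbar_eq (φ : S) : Vbar φ = V φ := by
    simp only [Vbar, hWbar_eq, W, Real.log_exp]
    ring
  have hVbar_cont : Continuous Vbar :=
    continuous_const.mul (hWbar_cont.log fun φ => (hWbar_pos φ).ne')
  refine ⟨Vbar, hVbar_cont, hVbar_eq, fun φ ψ x => ?_⟩
  have key : ∀ p : E × E, |rexp (-(x ^ 2 * Vbar p.1 / 2)) - rexp (-(x ^ 2 * Vbar p.2 / 2))|
      ≤ |x| * (K * ‖p.1 - p.2‖) := by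
    refine fun p => (hS.prod hS).induction (fun p hp => ?_)
      (isClosed_le (by fun_prop) (by fun_prop)) p
    simpa only [← hVbar_eq] using hV ⟨p.1, hp.1⟩ ⟨p.2, hp.2⟩ x
  exact key (φ, ψ)

end Extension

lemma TendstoUniformlyOn.of_dense {X α β ι : Type*} [PseudoMetricSpace X] [PseudoMetricSpace β]
    {l : Filter ι} {F : ι → X → α → β} {G : X → α → β} {s : Set α} {D : Set X} (hD : Dense D)
    {L : ℝ} (hF : ∀ i φ ψ, ∀ x ∈ s, dist (F i φ x) (F i ψ x) ≤ L * dist φ ψ)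
    (hG : ∀ φ ψ, ∀ x ∈ s, dist (G φ x) (G ψ x) ≤ L * dist φ ψ)
    (hlim : ∀ ψ ∈ D, TendstoUniformlyOn (fun i => F i ψ) (G ψ) l s) (φ : X) :
    TendstoUniformlyOn (fun i => F i φ) (G φ) l s := by
  rw [Metric.tendstoUniformlyOn_iff]
  intro ε hε
  obtain ⟨ψ, hψD, hφψ⟩ := hD.exists_dist_lt φ (show 0 < ε / (3 * (|L| + 1)) by positivity)
  have hclose : L * dist φ ψ < ε / 3 := by
    rw [lt_div_iff₀ (by positivity)] at hφψ
    nlinarith [le_abs_self L, abs_nonneg L, dist_nonneg (x := φ) (y := ψ)]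
  filter_upwards [Metric.tendstoUniformlyOn_iff.mp (hlim ψ hψD) (ε / 3) (by positivity)]
    with i hi x hx
  calc dist (G φ x) (F i φ x)
      ≤ dist (G φ x) (G ψ x) + dist (G ψ x) (F i ψ x) + dist (F i ψ x) (F i φ x) :=
        dist_triangle4 _ _ _ _
    _ < ε / 3 + ε / 3 + ε / 3 := by
        gcongr
        · exact (hG φ ψ x hx).trans_lt hclose
        · exact hi x hx
        · exact (hF i ψ φ x hx).trans_lt (dist_comm φ ψ ▸ hclose)
    _ = ε := by ring

lemma dist_cexp_neg_sq_mul_div_two (x u v : ℝ) :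
    dist (Complex.exp (-(x : ℂ) ^ 2 * (u : ℂ) / 2)) (Complex.exp (-(x : ℂ) ^ 2 * (v : ℂ) / 2))
      = |rexp (-(x ^ 2 * u / 2)) - rexp (-(x ^ 2 * v / 2))| := by
  rw [Complex.dist_eq, ← Real.norm_eq_abs, ← Complex.norm_real]
  push_cast
  ring_nf

theorem stmt3_general
    -- the normed space 𝓛 of test functions, realized as functions ℝ → ℝ via toFun
    (𝓛 : Type) [NormedAddCommGroup 𝓛] [NormedSpace ℝ 𝓛] (toFun : 𝓛 →ₗ[ℝ] (ℝ → ℝ))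
    -- the triangular array on its probability spaces
    (Ω : ℕ → Type) (mΩ : ∀ n, MeasurableSpace (Ω n)) (μ : ∀ n, Measure (Ω n))
    (hμ : ∀ n, IsProbabilityMeasure (μ n))
    (ξ : ∀ n : ℕ, Fin n → Ω n → ℝ)
    (hL2 : ∀ (φ : 𝓛) (n : ℕ), MemLp (fun ω => ∑ l, toFun φ (ξ n l ω)) 2 (μ n))
    -- the normalizing sequence
    (d : ℕ → ℝ) (hd : ∀ n, 0 < d n)
    -- (a) the variance bound
    (Cb : ℝ)
    (ha : ∀ (φ : 𝓛) (n : ℕ),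
      d n * variance (fun ω => ∑ l, toFun φ (ξ n l ω)) (μ n) ≤ Cb * ‖φ‖ ^ 2)
    -- (b) CLT on a dense linear manifold 𝓛₁ with continuous quadratic V ≥ 0
    (𝓛₁ : Submodule ℝ 𝓛) (hdense : Dense (𝓛₁ : Set 𝓛))
    (V : 𝓛₁ → ℝ)
    (hVquad : ∀ (c : ℝ) (φ : 𝓛₁), V (c • φ) = c ^ 2 * V φ)
    (hb : ∀ φ : 𝓛₁, ∀ a c : ℝ,
      TendstoUniformlyOn (fun n x => Zfun (μ n) (ξ n) (d n) x (toFun φ.1))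
        (fun x => Complex.exp (-(x : ℂ) ^ 2 * (V φ : ℂ) / 2)) atTop (Set.Icc a c)) :
    -- conclusion: V extends continuously and CLT holds on all of 𝓛
    ∃ Vbar : 𝓛 → ℝ, Continuous Vbar ∧ (∀ φ : 𝓛₁, Vbar φ.1 = V φ) ∧
      ∀ φ : 𝓛, ∀ a c : ℝ,
        TendstoUniformlyOn (fun n x => Zfun (μ n) (ξ n) (d n) x (toFun φ))
          (fun x => Complex.exp (-(x : ℂ) ^ 2 * (Vbar φ : ℂ) / 2)) atTop (Set.Icc a c) := by
  have hZ (n : ℕ) (φ ψ : 𝓛) (x : ℝ) :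
      dist (Zfun (μ n) (ξ n) (d n) x (toFun φ)) (Zfun (μ n) (ξ n) (d n) x (toFun ψ))
        ≤ |x| * (√Cb * ‖φ - ψ‖) := by
    refine (dist_Zfun_le (ξ n) (hd n).le x (hL2 φ n) (hL2 ψ n)
      (B := Cb * ‖φ - ψ‖ ^ 2) ?_).trans_eq ?_
    · rw [← map_sub]
      exact ha (φ - ψ) n
    · rw [Real.sqrt_mul' _ (sq_nonneg _), Real.sqrt_sq (norm_nonneg _)]
  have hgauss (φ ψ : 𝓛₁) (x : ℝ) :
      |rexp (-(x ^ 2 * V φ / 2)) - rexp (-(x ^ 2 * V ψ / 2))| ≤ |x| * (√Cb * ‖(φ : 𝓛) - ψ‖) := by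
    rw [← dist_cexp_neg_sq_mul_div_two]
    exact le_of_tendsto' (((hb φ x x).tendsto_at ⟨le_rfl, le_rfl⟩).dist
      ((hb ψ x x).tendsto_at ⟨le_rfl, le_rfl⟩)) fun n => hZ n φ ψ x
  obtain ⟨Vbar, hVbar_cont, hVbar_eq, hVbar⟩ :=
    exists_continuous_extension_of_abs_exp_sub_le hdense (by simpa using hVquad 0 0) hgauss
  refine ⟨Vbar, hVbar_cont, hVbar_eq, fun φ a c => ?_⟩
  have hIcc {x : ℝ} (hx : x ∈ Set.Icc a c) (φ ψ : 𝓛) :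
      |x| * (√Cb * ‖φ - ψ‖) ≤ max |a| |c| * √Cb * dist φ ψ := by
    rw [← mul_assoc, dist_eq_norm]
    gcongr
    exact abs_le_max_abs_abs hx.1 hx.2
  refine TendstoUniformlyOn.of_dense (F := fun n φ x => Zfun (μ n) (ξ n) (d n) x (toFun φ))
    (G := fun φ x => Complex.exp (-(x : ℂ) ^ 2 * (Vbar φ : ℂ) / 2)) hdense
    (fun n φ ψ x hxI => (hZ n φ ψ x).trans (hIcc hxI φ ψ)) (fun φ ψ x hxI => ?_) (fun ψ hψ => ?_) φ
  · exact (dist_cexp_neg_sq_mul_div_two _ _ _).trans_le ((hVbar φ ψ x).trans (hIcc hxI φ ψ))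
  · simpa only [← hVbar_eq] using hb ⟨ψ, hψ⟩ a c

theorem stmt3
    -- the normed space 𝓛 of test functions, realized as functions ℝ → ℝ via toFun
    (𝓛 : Type) [NormedAddCommGroup 𝓛] [NormedSpace ℝ 𝓛] (toFun : 𝓛 →ₗ[ℝ] (ℝ → ℝ))
    -- the triangular array on its probability spaces
    (Ω : ℕ → Type) (mΩ : ∀ n, MeasurableSpace (Ω n)) (μ : ∀ n, Measure (Ω n))
    (hμ : ∀ n, IsProbabilityMeasure (μ n))
    (ξ : ∀ n : ℕ, Fin n → Ω n → ℝ) (hξ : ∀ n l, Measurable (ξ n l))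
    (hL2 : ∀ (φ : 𝓛) (n : ℕ), MemLp (fun ω => ∑ l, toFun φ (ξ n l ω)) 2 (μ n))
    -- the normalizing sequence
    (d : ℕ → ℝ) (hd : ∀ n, 0 < d n)
    -- (a) the variance bound
    (Cb : ℝ)
    (ha : ∀ (φ : 𝓛) (n : ℕ),
      d n * variance (fun ω => ∑ l, toFun φ (ξ n l ω)) (μ n) ≤ Cb * ‖φ‖ ^ 2)
    -- (b) CLT on a dense linear manifold 𝓛₁ with continuous quadratic V ≥ 0
    (𝓛₁ : Submodule ℝ 𝓛) (hdense : Dense (𝓛₁ : Set 𝓛))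
    (V : 𝓛₁ → ℝ) (hVcont : Continuous V) (hVpos : ∀ φ, 0 ≤ V φ)
    (hVquad : ∀ (c : ℝ) (φ : 𝓛₁), V (c • φ) = c ^ 2 * V φ)
    (hb : ∀ φ : 𝓛₁, ∀ a c : ℝ,
      TendstoUniformlyOn (fun n x => Zfun (μ n) (ξ n) (d n) x (toFun φ.1))
        (fun x => Complex.exp (-(x : ℂ) ^ 2 * (V φ : ℂ) / 2)) atTop (Set.Icc a c)) :
    -- conclusion: V extends continuously and CLT holds on all of 𝓛
    ∃ Vbar : 𝓛 → ℝ, Continuous Vbar ∧ (∀ φ : 𝓛₁, Vbar φ.1 = V φ) ∧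
      ∀ φ : 𝓛, ∀ a c : ℝ,
        TendstoUniformlyOn (fun n x => Zfun (μ n) (ξ n) (d n) x (toFun φ))
          (fun x => Complex.exp (-(x : ℂ) ^ 2 * (Vbar φ : ℂ) / 2)) atTop (Set.Icc a c) :=
  stmt3_general 𝓛 toFun Ω mΩ μ hμ ξ hL2 d hd Cb ha 𝓛₁ hdense V hVquad hb
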